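/- In the q-shuffle algebra V, for all n ∈ ℕ: Σ_{k=0}^{n} q^{2k−n} G_{n−k} ⋆ W_{−k} = Σ_{k=0}^{n} q^{n−2k} W_{−k} ⋆ G_{n−k}, and this common value equals [2]_q^n (xy+yx)^n x, where [2]_q = q + q⁻¹ and the power (xy+yx)^n and the final multiplication by x are taken in the free (concatenation) algebra. -/

import Mathlib

/-!
Write `S_n = Σ_{i+j=n} q^{j-i} G_i ⋆ W_{-j}` and `T_n = Σ_{i+j=n} q^{j-i} W_{-i} ⋆ G_j`, and let
`U_n`, `V_n` be the analogous sums of `W_{-i} ⋆ W_{-j}` and `G_i ⋆ G_j`. All these words alternate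
in `x` and `y`, so in Rosso's recursion the exponent `⟨u₁,b⟩ + ⋯ + ⟨u_r,b⟩` is `0` when `u = G_i`
and `⟨x,b⟩ = ±2` when `u = W_{-i}`. Splitting off the first letter therefore gives
`S_{n+1} = q⁻¹ y U_n + x V_{n+1} = T_{n+1}`, `V_{n+1} = q y S_n + q⁻¹ y T_n` and
`U_n = x S_n + q² x T_n`. Hence `S_n = T_n` for all `n`, and then
`S_{n+1} = [2]_q (xy + yx) S_n` with `S_0 = x`.
-/

noncomputable section

/-- Words in the letters `x` (= `false`) and `y` (= `true`). -/
abbrev Wd := List Bool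

/-- The underlying vector space of the free algebra `F⟨x,y⟩`,
with the words as a basis. -/
abbrev V (F : Type*) [Field F] := Wd →₀ F

/-- The pairing `⟨u,v⟩` on letters: `2` if equal, `-2` if distinct. -/
def pr (a b : Bool) : ℤ := if a = b then 2 else -2

/-- `⟨u₁,b⟩ + ⟨u₂,b⟩ + ⋯ + ⟨u_r,b⟩` for a word `u` and a letter `b`. -/
def wsum (u : Wd) (b : Bool) : ℤ := (u.map fun a => pr a b).sum

variable {F : Type*} [Field F]

/-- Left multiplication by a letter, in the free (concatenation) algebra. -/
def lmul (a : Bool) (f : V F) : V F := Finsupp.mapDomain (fun w => a :: w) f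

/-- The `q`-shuffle product of two words (as an element of `V F`), defined by
Rosso's recursion
`u ⋆ v = u₁((u₂⋯u_r) ⋆ v) + q^{⟨u₁,v₁⟩+⋯+⟨u_r,v₁⟩} v₁(u ⋆ (v₂⋯v_s))`. -/
def sh (q : F) : Wd → Wd → V F
  | [], v => Finsupp.single v 1
  | u@(_ :: _), [] => Finsupp.single u 1
  | a :: u', b :: v' =>
      lmul a (sh q u' (b :: v')) +
        q ^ wsum (a :: u') b • lmul b (sh q (a :: u') v')
  termination_by u v => u.length + v.length
  decreasing_by all_goals (simp only [List.length_cons]; omega)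

/-- The `q`-shuffle product on `V F`, extended bilinearly from words. -/
def st (q : F) (f g : V F) : V F :=
  f.sum fun u cu => g.sum fun v cv => (cu * cv) • sh q u v

/-- The concatenation (free-algebra) product on `V F`. -/
def cm (f g : V F) : V F :=
  f.sum fun u cu => g.sum fun v cv => Finsupp.single (u ++ v) (cu * cv)

/-- Powers with respect to the concatenation product. -/
def cpow (f : V F) : ℕ → V F
  | 0 => Finsupp.single [] 1
  | n + 1 => cm f (cpow f n)

/-- The alternating word `W_{-k} = xyx⋯x` of length `2k+1`. -/
def altX : ℕ → Wd
  | 0 => [false]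
  | k + 1 => false :: true :: altX k

/-- The alternating word `W_{k+1} = yxy⋯y` of length `2k+1`. -/
def altY : ℕ → Wd
  | 0 => [true]
  | k + 1 => true :: false :: altY k

/-- The alternating word `G_k = (yx)^k`. -/
def gw : ℕ → Wd
  | 0 => []
  | k + 1 => true :: false :: gw k

/-- The alternating word `G̃_k = (xy)^k`. -/
def gtw : ℕ → Wd
  | 0 => []
  | k + 1 => false :: true :: gtw k

/-- `W_{-k}` as an element of `V F`. -/
def Wm (F : Type*) [Field F] (k : ℕ) : V F := Finsupp.single (altX k) 1

/-- `W_{k+1}` as an element of `V F`. -/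
def Wp (F : Type*) [Field F] (k : ℕ) : V F := Finsupp.single (altY k) 1

/-- `G_k` as an element of `V F`. -/
def Gn (F : Type*) [Field F] (k : ℕ) : V F := Finsupp.single (gw k) 1

/-- `G̃_k` as an element of `V F`. -/
def Gt (F : Type*) [Field F] (k : ℕ) : V F := Finsupp.single (gtw k) 1

open Finset

@[simp]
lemma gw_zero : gw 0 = [] := rfl

@[simp]
lemma false_cons_gw (k : ℕ) : false :: gw k = altX k := by
  induction k with
  | zero => rfl
  | succ k ih => rw [gw, altX, ih]

@[simp]
lemma true_cons_altX (k : ℕ) : true :: altX k = gw (k + 1) := by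
  rw [← false_cons_gw, gw]

@[simp]
lemma wsum_cons (a : Bool) (u : Wd) (b : Bool) : wsum (a :: u) b = pr a b + wsum u b := by
  simp [wsum]

lemma wsum_gw (k : ℕ) (b : Bool) : wsum (gw k) b = 0 := by
  induction k with
  | zero => rfl
  | succ k ih => cases b <;> simp only [gw, wsum_cons, ih, pr] <;> norm_num

lemma wsum_altX (k : ℕ) (b : Bool) : wsum (altX k) b = pr false b := by
  simp [← false_cons_gw, wsum_gw]

@[simp]
lemma lmul_add (a : Bool) (f g : V F) : lmul a (f + g) = lmul a f + lmul a g :=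
  Finsupp.mapDomain_add

@[simp]
lemma lmul_smul (a : Bool) (c : F) (f : V F) : lmul a (c • f) = c • lmul a f :=
  Finsupp.mapDomain_smul c f

@[simp]
lemma lmul_single (a : Bool) (u : Wd) (c : F) :
    lmul a (Finsupp.single u c) = Finsupp.single (a :: u) c :=
  Finsupp.mapDomain_single

@[simp]
lemma lmul_sum {ι : Type*} (a : Bool) (s : Finset ι) (f : ι → V F) :
    lmul a (∑ i ∈ s, f i) = ∑ i ∈ s, lmul a (f i) :=
  map_sum (Finsupp.mapDomain.addMonoidHom _) _ _

lemma cm_zero_left (g : V F) : cm 0 g = 0 := by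
  simp [cm]

lemma cm_add_left (f g h : V F) : cm (f + g) h = cm f h + cm g h := by
  refine Finsupp.sum_add_index' (fun u => by simp) (fun u c₁ c₂ => ?_)
  rw [← Finsupp.sum_add]
  exact Finsupp.sum_congr fun v _ => by rw [add_mul, Finsupp.single_add]

lemma cm_single_nil_one_left (g : V F) : cm (Finsupp.single [] 1) g = g := by
  rw [cm, Finsupp.sum_single_index (by simp)]
  simp only [List.nil_append, one_mul]
  exact Finsupp.sum_single g

lemma cm_lmul_left (a : Bool) (f g : V F) : cm (lmul a f) g = lmul a (cm f g) := by
  induction f using Finsupp.induction_linear with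
  | zero => simp [lmul, cm_zero_left]
  | add f₁ f₂ h₁ h₂ => rw [lmul_add, cm_add_left, cm_add_left, h₁, h₂, lmul_add]
  | single v c =>
    rw [lmul_single, cm, cm, Finsupp.sum_single_index (by simp),
      Finsupp.sum_single_index (by simp), lmul, Finsupp.mapDomain_sum]
    simp only [Finsupp.mapDomain_single, List.cons_append]

lemma cm_xy_add_yx_left (g : V F) :
    cm (Gt F 1 + Gn F 1) g = lmul false (lmul true g) + lmul true (lmul false g) := by
  have hxy : Gt F 1 = lmul false (lmul true (Finsupp.single [] 1)) := by simp [Gt, gtw]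
  have hyx : Gn F 1 = lmul true (lmul false (Finsupp.single [] 1)) := by simp [Gn, gw]
  rw [hxy, hyx, cm_add_left, cm_lmul_left, cm_lmul_left, cm_lmul_left, cm_lmul_left,
    cm_single_nil_one_left]

lemma cm_cpow_xy_add_yx_succ (g : V F) (n : ℕ) :
    cm (cpow (Gt F 1 + Gn F 1) (n + 1)) g =
      lmul false (lmul true (cm (cpow (Gt F 1 + Gn F 1) n) g)) +
        lmul true (lmul false (cm (cpow (Gt F 1 + Gn F 1) n) g)) := by
  rw [cpow, cm_xy_add_yx_left, cm_add_left, cm_lmul_left, cm_lmul_left, cm_lmul_left,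
    cm_lmul_left]

section ShuffleAlternating

variable (q : F)

@[simp]
lemma sh_nil_left (v : Wd) : sh q [] v = Finsupp.single v 1 := by
  rw [sh]

@[simp]
lemma sh_nil_right (u : Wd) : sh q u [] = Finsupp.single u 1 := by
  cases u <;> rw [sh]

lemma st_single_single (u v : Wd) :
    st q (Finsupp.single u 1) (Finsupp.single v 1) = sh q u v := by
  simp [st]

lemma sh_altX_altX (i j : ℕ) : sh q (altX i) (altX j) =
    lmul false (sh q (gw i) (altX j)) + q ^ 2 • lmul false (sh q (altX i) (gw j)) := by
  conv_lhs => rw [← false_cons_gw i, ← false_cons_gw j, sh]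
  simp [wsum_altX, pr]

lemma sh_gw_succ_altX (i j : ℕ) : sh q (gw (i + 1)) (altX j) =
    lmul true (sh q (altX i) (altX j)) + lmul false (sh q (gw (i + 1)) (gw j)) := by
  conv_lhs => rw [← true_cons_altX i, ← false_cons_gw j, sh]
  simp [wsum_gw]

lemma sh_altX_gw_succ (i j : ℕ) : sh q (altX i) (gw (j + 1)) =
    lmul false (sh q (gw i) (gw (j + 1))) + (q ^ 2)⁻¹ • lmul true (sh q (altX i) (altX j)) := by
  conv_lhs => rw [← false_cons_gw i, ← true_cons_altX j, sh]
  simp [wsum_altX, pr]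

lemma sh_gw_succ_gw_succ (i j : ℕ) : sh q (gw (i + 1)) (gw (j + 1)) =
    lmul true (sh q (altX i) (gw (j + 1))) + lmul true (sh q (gw (i + 1)) (altX j)) := by
  conv_lhs => rw [← true_cons_altX i, ← true_cons_altX j, sh]
  simp [wsum_gw]

def shSum (a b : ℕ → Wd) (n : ℕ) : V F :=
  ∑ p ∈ antidiagonal n, q ^ ((p.2 : ℤ) - p.1) • sh q (a p.1) (b p.2)

lemma shSum_altX_altX (n : ℕ) : shSum q altX altX n =
    lmul false (shSum q gw altX n) + q ^ 2 • lmul false (shSum q altX gw n) := by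
  simp only [shSum, lmul_sum, lmul_smul, smul_sum, ← sum_add_distrib, sh_altX_altX, smul_add]
  refine sum_congr rfl fun p _ => ?_
  rw [smul_comm]

variable {q}

lemma shSum_gw_altX_succ (hq : q ≠ 0) (n : ℕ) : shSum q gw altX (n + 1) =
    q⁻¹ • lmul true (shSum q altX altX n) + lmul false (shSum q gw gw (n + 1)) := by
  simp only [shSum, Nat.sum_antidiagonal_succ, sh_gw_succ_altX, lmul_add, lmul_sum, lmul_smul,
    smul_sum, smul_add]
  have shift : ∀ i j : ℕ, q ^ ((j : ℤ) - (i + 1 : ℕ)) = q⁻¹ * q ^ ((j : ℤ) - i) := fun i j => by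
    rw [← zpow_neg_one, ← zpow_add₀ hq]
    congr 1
    push_cast
    ring
  simp only [shift, mul_smul, sum_add_distrib, gw_zero, sh_nil_left, lmul_single, false_cons_gw]
  abel

lemma shSum_altX_gw_succ (hq : q ≠ 0) (n : ℕ) : shSum q altX gw (n + 1) =
    q⁻¹ • lmul true (shSum q altX altX n) + lmul false (shSum q gw gw (n + 1)) := by
  simp only [shSum, Nat.sum_antidiagonal_succ', sh_altX_gw_succ, lmul_add, lmul_sum, lmul_smul,
    smul_sum, smul_add]
  have shift : ∀ i j : ℕ, q ^ ((j + 1 : ℕ) - (i : ℤ)) * (q ^ 2)⁻¹ = q⁻¹ * q ^ ((j : ℤ) - i) :=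
    fun i j => by
      rw [← zpow_natCast, ← zpow_neg, ← zpow_neg_one, ← zpow_add₀ hq, ← zpow_add₀ hq]
      congr 1
      push_cast
      ring
  simp only [sum_add_distrib, smul_smul, shift, gw_zero, sh_nil_right, lmul_single, false_cons_gw]
  abel

lemma shSum_gw_gw_succ (hq : q ≠ 0) (n : ℕ) : shSum q gw gw (n + 1) =
    q • lmul true (shSum q gw altX n) + q⁻¹ • lmul true (shSum q altX gw n) := by
  cases n with
  | zero => simp [shSum, Nat.sum_antidiagonal_succ]
  | succ m =>
    conv_lhs => rw [shSum, Nat.sum_antidiagonal_succ, Nat.sum_antidiagonal_succ']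
    conv_rhs => rw [shSum, shSum, Nat.sum_antidiagonal_succ, Nat.sum_antidiagonal_succ']
    simp only [sh_gw_succ_gw_succ, lmul_add, lmul_sum, lmul_smul, smul_sum, smul_add]
    have raise : ∀ e : ℤ, q * q ^ e = q ^ (e + 1) := fun e => by rw [zpow_add_one₀ hq, mul_comm]
    have lower : ∀ e : ℤ, q⁻¹ * q ^ e = q ^ (e - 1) := fun e => by
      rw [zpow_sub_one₀ hq, mul_comm]
    simp only [smul_smul, raise, lower, sum_add_distrib, gw_zero, sh_nil_left, sh_nil_right,
      lmul_single, true_cons_altX]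
    push_cast
    ring_nf
    abel

lemma shSum_gw_altX_eq_shSum_altX_gw (hq : q ≠ 0) :
    ∀ n, shSum q gw altX n = shSum q altX gw n
  | 0 => by simp [shSum]
  | n + 1 => by rw [shSum_gw_altX_succ hq, shSum_altX_gw_succ hq]

lemma shSum_gw_altX_eq_smul_cm (hq : q ≠ 0) (n : ℕ) :
    shSum q gw altX n = (q + q⁻¹) ^ n • cm (cpow (Gt F 1 + Gn F 1) n) (Wm F 0) := by
  induction n with
  | zero => simp [shSum, cpow, cm_single_nil_one_left, Wm]
  | succ n ih =>
    rw [shSum_gw_altX_succ hq, shSum_gw_gw_succ hq, shSum_altX_altX,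
      ← shSum_gw_altX_eq_shSum_altX_gw hq, ih, cm_cpow_xy_add_yx_succ]
    have hq2 : q⁻¹ * q ^ 2 = q := by field_simp
    simp only [lmul_add, lmul_smul, smul_add, smul_smul]
    match_scalars
    · linear_combination (q + q⁻¹) ^ n * hq2
    · ring

lemma sum_range_st_Gn_Wm (n : ℕ) :
    ∑ k ∈ range (n + 1), q ^ (2 * (k : ℤ) - n) • st q (Gn F (n - k)) (Wm F k) =
      shSum q gw altX n := by
  rw [shSum, ← Nat.sum_antidiagonal_swap, Nat.sum_antidiagonal_eq_sum_range_succ_mk]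
  refine sum_congr rfl fun k hk => ?_
  rw [Gn, Wm, st_single_single, Prod.swap_prod_mk,
    Nat.cast_sub (Nat.lt_succ_iff.mp (mem_range.mp hk))]
  congr 2
  ring

lemma sum_range_st_Wm_Gn (n : ℕ) :
    ∑ k ∈ range (n + 1), q ^ ((n : ℤ) - 2 * k) • st q (Wm F k) (Gn F (n - k)) =
      shSum q altX gw n := by
  rw [shSum, Nat.sum_antidiagonal_eq_sum_range_succ_mk]
  refine sum_congr rfl fun k hk => ?_
  rw [Gn, Wm, st_single_single, Nat.cast_sub (Nat.lt_succ_iff.mp (mem_range.mp hk))]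
  congr 2
  ring

end ShuffleAlternating

theorem stmt_9_general {F : Type*} [Field F] (q : F) (hq : q ≠ 0) (n : ℕ) :
    (∑ k ∈ Finset.range (n + 1),
        q ^ (2 * (k : ℤ) - (n : ℤ)) • st q (Gn F (n - k)) (Wm F k))
      = (∑ k ∈ Finset.range (n + 1),
          q ^ ((n : ℤ) - 2 * (k : ℤ)) • st q (Wm F k) (Gn F (n - k))) ∧
    (∑ k ∈ Finset.range (n + 1),
        q ^ (2 * (k : ℤ) - (n : ℤ)) • st q (Gn F (n - k)) (Wm F k))
      = ((q + q⁻¹) ^ n) • cm (cpow (Gt F 1 + Gn F 1) n) (Wm F 0) := by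
  rw [sum_range_st_Gn_Wm, sum_range_st_Wm_Gn]
  exact ⟨shSum_gw_altX_eq_shSum_altX_gw hq n, shSum_gw_altX_eq_smul_cm hq n⟩

/-- `Σ_{k=0}^n q^{2k−n} G_{n−k} ⋆ W_{−k} = Σ_{k=0}^n q^{n−2k} W_{−k} ⋆ G_{n−k}
= [2]_q^n (xy+yx)^n x`. -/
theorem stmt_9 {F : Type*} [Field F] (q : F) (hq : q ≠ 0)
    (hq' : ∀ n : ℕ, 0 < n → q ^ n ≠ 1) (n : ℕ) :
    (∑ k ∈ Finset.range (n + 1),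
        q ^ (2 * (k : ℤ) - (n : ℤ)) • st q (Gn F (n - k)) (Wm F k))
      = (∑ k ∈ Finset.range (n + 1),
          q ^ ((n : ℤ) - 2 * (k : ℤ)) • st q (Wm F k) (Gn F (n - k))) ∧
    (∑ k ∈ Finset.range (n + 1),
        q ^ (2 * (k : ℤ) - (n : ℤ)) • st q (Gn F (n - k)) (Wm F k))
      = ((q + q⁻¹) ^ n) • cm (cpow (Gt F 1 + Gn F 1) n) (Wm F 0) :=
  stmt_9_general q hq n
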